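/- arXiv:2106.00176 — 2 statements merged into one kernel-verified Lean document; each statement's English description precedes it below -/
import Mathlib

section
/- Fix a real number R > 1, an integer n ≥ 2, and an integer m ≥ 3. Define β : ℤ → ℝ by β(k) = R^{d(k)} with d(k) = min_{l ∈ ℤ} |k − 2nl|, and let S be the bounded invertible operator on ℓ²(ℤ, ℂ) with S e_k = (β(k+1)/β(k)) e_{k+1} for all k ∈ ℤ. Let v ∈ ℓ²(ℤ, ℂ) be the vector v = (1/m) · Σ_{l=0}^{m²} e_{2ln}. Then ‖v‖ = √(m² + 1)/m and ‖(S^n + S^{-n}) v‖ ≥ 2 R^n. -/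
/-! Since `β = 1` at the even multiples `2ln` of `n` and `β = Rⁿ` at the odd multiples
`(2l+1)n`, the operator `Sⁿ + S⁻ⁿ` maps `e_{2ln}` to `Rⁿ (e_{(2l+1)n} + e_{(2l-1)n})`. Summing over
`0 ≤ l ≤ m²`, each of the `m²` odd multiples strictly between `-n` and `(2m²+1)n` is hit twice,
so `(Sⁿ + S⁻ⁿ) v = (Rⁿ/m) (2u + e_{-n} + e_{(2m²+1)n})` where `‖u‖ = m`; the two boundary
vectors are orthogonal to `u`, whence `‖(Sⁿ + S⁻ⁿ) v‖ ≥ 2 Rⁿ`. -/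

/-- The Hilbert space `ℓ²(ℤ, ℂ)`. -/
noncomputable abbrev ellTwo : Type := lp (fun _ : ℤ => ℂ) 2

/-- The standard orthonormal basis vectors `e_k` of `ℓ²(ℤ, ℂ)`. -/
noncomputable def stdBasis (k : ℤ) : ellTwo := lp.single 2 k (1 : ℂ)

/-- `d(k) = min_{l ∈ ℤ} |k - 2nl|`, the distance from `k` to the nearest
integer multiple of `2n`. -/
noncomputable def distMult (n : ℕ) (k : ℤ) : ℤ :=
  sInf (Set.range fun l : ℤ => |k - 2 * (n : ℤ) * l|)

/-- The weight sequence `β(k) = R^{d(k)}`. -/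
noncomputable def weightβ (R : ℝ) (n : ℕ) (k : ℤ) : ℝ := R ^ distMult n k

lemma orthonormal_stdBasis : Orthonormal ℂ stdBasis := by
  rw [orthonormal_iff_ite]
  intro i j
  simp [stdBasis, lp.inner_single_left, lp.single_apply, Pi.single_apply]

lemma Finset.sum_range_succ_add_sub_one {M : Type*} [AddCommMonoid M] (f : ℤ → M) (N : ℕ) :
    ∑ l ∈ range (N + 1), (f l + f (l - 1)) = 2 • ∑ l ∈ range N, f l + (f (-1) + f N) := by
  rw [sum_add_distrib, sum_range_succ, sum_range_succ']
  push_cast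
  simp only [add_sub_cancel_right, two_nsmul]
  abel

lemma norm_le_norm_add_of_inner_eq_zero {𝕜 E : Type*} [RCLike 𝕜] [NormedAddCommGroup E]
    [InnerProductSpace 𝕜 E] {x y : E} (h : inner 𝕜 x y = 0) : ‖x‖ ≤ ‖x + y‖ := by
  have := norm_add_sq_eq_norm_sq_add_norm_sq_of_inner_eq_zero x y h
  nlinarith [norm_nonneg x, norm_nonneg (x + y), sq_nonneg ‖y‖]

namespace Orthonormal

variable {𝕜 E ι κ : Type*} [RCLike 𝕜] [NormedAddCommGroup E] [InnerProductSpace 𝕜 E]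
  {v : ι → E}

lemma norm_sum_comp (hv : Orthonormal 𝕜 v) {f : κ → ι} (hf : Function.Injective f)
    (s : Finset κ) : ‖∑ k ∈ s, v (f k)‖ = √(s.card : ℝ) := by
  have h := (hv.comp f hf).inner_sum (fun _ => 1) (fun _ => 1) s
  simp only [Function.comp_apply, one_smul, map_one, mul_one, Finset.sum_const,
    nsmul_eq_mul] at h
  rw [← Real.sqrt_sq (norm_nonneg _), ← inner_self_eq_norm_sq (𝕜 := 𝕜), h]
  simp

lemma inner_sum_comp_eq_zero (hv : Orthonormal 𝕜 v) {f : κ → ι} {s : Finset κ}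
    {j : ι} (hj : ∀ k ∈ s, f k ≠ j) : inner 𝕜 (∑ k ∈ s, v (f k)) (v j) = 0 := by
  rw [sum_inner]
  exact Finset.sum_eq_zero fun k hk => hv.inner_eq_zero (hj k hk)

lemma two_mul_sqrt_le_norm_sum_range_add_sub_one {v : ℤ → E} (hv : Orthonormal 𝕜 v) (N : ℕ) :
    2 * √(N : ℝ) ≤ ‖∑ l ∈ Finset.range (N + 1), (v l + v (l - 1))‖ := by
  set u := ∑ l ∈ Finset.range N, v l
  have hu : ‖u‖ = √(N : ℝ) := by
    rw [← Finset.card_range N]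
    exact hv.norm_sum_comp Nat.cast_injective _
  have h₁ : inner 𝕜 u (v (-1)) = 0 := hv.inner_sum_comp_eq_zero (f := Nat.cast) fun l _ => by omega
  have h₂ : inner 𝕜 u (v N) = 0 :=
    hv.inner_sum_comp_eq_zero (f := Nat.cast) fun l hl => by rw [Finset.mem_range] at hl; omega
  have horth : inner 𝕜 (2 • u) (v (-1) + v N) = 0 := by
    rw [two_nsmul, inner_add_left, inner_add_right, h₁, h₂, add_zero, add_zero]
  calc 2 * √(N : ℝ) = ‖2 • u‖ := by rw [RCLike.norm_nsmul 𝕜, hu, nsmul_eq_mul, Nat.cast_ofNat]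
    _ ≤ ‖2 • u + (v (-1) + v N)‖ := norm_le_norm_add_of_inner_eq_zero horth
    _ = _ := by rw [Finset.sum_range_succ_add_sub_one]

end Orthonormal

section WeightedShift

variable {β : ℤ → ℝ} {A : ellTwo →L[ℂ] ellTwo} {d : ℤ}

lemma pow_apply_stdBasis_of_apply_stdBasis (hβ : ∀ k, β k ≠ 0)
    (hA : ∀ k, A (stdBasis k) = ((β (k + d) / β k : ℝ) : ℂ) • stdBasis (k + d)) (j : ℕ) (k : ℤ) :
    (A ^ j) (stdBasis k) = ((β (k + j * d) / β k : ℝ) : ℂ) • stdBasis (k + j * d) := by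
  induction j with
  | zero => simp [div_self (hβ k)]
  | succ j ih =>
    rw [pow_succ', mul_apply_eq_comp, ih, map_smul, hA, smul_smul, ← Complex.ofReal_mul,
      div_mul_div_comm, mul_comm (β _), mul_div_mul_right _ _ (hβ _)]
    push_cast
    ring_nf

lemma apply_stdBasis_of_comp_eq_one {S : ellTwo →L[ℂ] ellTwo} (hβ : ∀ k, β k ≠ 0)
    (hS : ∀ k, S (stdBasis k) = ((β (k + 1) / β k : ℝ) : ℂ) • stdBasis (k + 1))
    (hAS : A ∘L S = 1) (k : ℤ) :
    A (stdBasis k) = ((β (k + -1) / β k : ℝ) : ℂ) • stdBasis (k + -1) := by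
  have h := congr($hAS (stdBasis (k + -1)))
  rw [ContinuousLinearMap.comp_apply, hS, neg_add_cancel_right, map_smul,
    one_apply_eq_self] at h
  rw [← h, smul_smul, ← Complex.ofReal_mul, div_mul_div_cancel₀ (hβ k), div_self (hβ _)]
  simp

end WeightedShift

lemma distMult_two_mul_mul_add {n : ℕ} {q : ℤ} (hq : 0 ≤ q) (hqn : q ≤ n) (l : ℤ) :
    distMult n (2 * l * n + q) = q := by
  refine IsLeast.csInf_eq ⟨⟨l, by simp [abs_of_nonneg hq, mul_comm, mul_left_comm]⟩, ?_⟩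
  rintro _ ⟨l', rfl⟩
  have h : 2 * l * n + q - 2 * n * l' = 2 * n * (l - l') + q := by ring
  simp only [h, le_abs]
  rcases le_or_gt 0 (l - l') with hl | hl
  · left; nlinarith
  · right; nlinarith

lemma weightβ_two_mul_mul_add (R : ℝ) {n : ℕ} {q : ℤ} (hq : 0 ≤ q) (hqn : q ≤ n) (l : ℤ) :
    weightβ R n (2 * l * n + q) = R ^ q := by
  rw [weightβ, distMult_two_mul_mul_add hq hqn]

lemma weightedShift_pow_add_inv_pow_apply_stdBasis {R : ℝ} (hR : R ≠ 0) {n : ℕ}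
    {S Sinv : ellTwo →L[ℂ] ellTwo} (hinv : Sinv ∘L S = 1)
    (hS : ∀ k : ℤ, S (stdBasis k) =
      ((weightβ R n (k + 1) / weightβ R n k : ℝ) : ℂ) • stdBasis (k + 1)) (l : ℤ) :
    (S ^ n + Sinv ^ n) (stdBasis (2 * l * n)) =
      ((R ^ n : ℝ) : ℂ) • (stdBasis (2 * l * n + n) + stdBasis (2 * (l - 1) * n + n)) := by
  have hβ (k : ℤ) : weightβ R n k ≠ 0 := zpow_ne_zero _ hR
  have hβ_even : weightβ R n (2 * l * n) = 1 := by
    simpa using weightβ_two_mul_mul_add R le_rfl (Int.natCast_nonneg n) l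
  have hβ_odd (l : ℤ) : weightβ R n (2 * l * n + n) = R ^ n := by
    simpa using weightβ_two_mul_mul_add R (Int.natCast_nonneg n) le_rfl l
  have h₁ : 2 * l * n + n * 1 = 2 * l * n + n := by ring
  have h₂ : 2 * l * n + n * -1 = 2 * (l - 1) * n + n := by ring
  rw [add_apply, pow_apply_stdBasis_of_apply_stdBasis hβ hS,
    pow_apply_stdBasis_of_apply_stdBasis hβ (apply_stdBasis_of_comp_eq_one hβ hS hinv),
    smul_add, h₁, h₂, hβ_even, hβ_odd, hβ_odd, div_one]

theorem weighted_shift_test_vector_general (R : ℝ) (hR : 1 < R) (n : ℕ) (hn : 2 ≤ n)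
    (m : ℕ) (hm : 3 ≤ m)
    (S Sinv : ellTwo →L[ℂ] ellTwo)
    (hinv₂ : Sinv ∘L S = 1)
    (hS : ∀ k : ℤ, S (stdBasis k) =
      ((weightβ R n (k + 1) / weightβ R n k : ℝ) : ℂ) • stdBasis (k + 1))
    (v : ellTwo)
    (hv : v = ((1 : ℂ) / m) • ∑ l ∈ Finset.range (m ^ 2 + 1), stdBasis (2 * (l : ℤ) * n)) :
    ‖v‖ = Real.sqrt ((m : ℝ) ^ 2 + 1) / m ∧ 2 * R ^ n ≤ ‖(S ^ n + Sinv ^ n) v‖ := by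
  have hn0 : (n : ℤ) ≠ 0 := by omega
  have hm0 : (0 : ℝ) < m := by positivity
  refine ⟨?_, ?_⟩
  · have hinj : Function.Injective fun l : ℕ => 2 * (l : ℤ) * n := fun i j h => by
      have := mul_right_cancel₀ hn0 h; omega
    rw [hv, norm_smul, orthonormal_stdBasis.norm_sum_comp hinj, Finset.card_range,
      norm_div, norm_one, Complex.norm_natCast]
    push_cast
    field_simp
  have hodd : Function.Injective fun i : ℤ => 2 * i * n + n := fun i j h => by
    have := mul_right_cancel₀ hn0 (add_right_cancel h); omega
  have hTv : (S ^ n + Sinv ^ n) v = ((R ^ n / m : ℝ) : ℂ) • ∑ l ∈ Finset.range (m ^ 2 + 1),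
      (stdBasis (2 * (l : ℤ) * n + n) + stdBasis (2 * ((l : ℤ) - 1) * n + n)) := by
    simp_rw [hv, map_smul, map_sum,
      weightedShift_pow_add_inv_pow_apply_stdBasis (by positivity) hinv₂ hS, ← Finset.smul_sum,
      smul_smul]
    congr 1
    push_cast
    ring
  calc 2 * R ^ n = R ^ n / m * (2 * √((m ^ 2 : ℕ) : ℝ)) := by
        push_cast
        rw [Real.sqrt_sq hm0.le]
        field_simp
    _ ≤ _ := by
        rw [hTv, norm_smul, Complex.norm_real, Real.norm_of_nonneg (by positivity)]
        gcongr
        exact (orthonormal_stdBasis.comp _ hodd).two_mul_sqrt_le_norm_sum_range_add_sub_one _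

/-- Let `S` be the bounded invertible bilateral weighted shift on `ℓ²(ℤ, ℂ)` with
`S e_k = (β(k+1)/β(k)) e_{k+1}`, and let `v = (1/m) ∑_{l=0}^{m²} e_{2ln}` for `m ≥ 3`.
Then `‖v‖ = √(m² + 1)/m` and `‖(Sⁿ + S⁻ⁿ) v‖ ≥ 2 Rⁿ`. -/
theorem weighted_shift_test_vector (R : ℝ) (hR : 1 < R) (n : ℕ) (hn : 2 ≤ n)
    (m : ℕ) (hm : 3 ≤ m)
    (S Sinv : ellTwo →L[ℂ] ellTwo)
    (hinv₁ : S ∘L Sinv = 1) (hinv₂ : Sinv ∘L S = 1)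
    (hS : ∀ k : ℤ, S (stdBasis k) =
      ((weightβ R n (k + 1) / weightβ R n k : ℝ) : ℂ) • stdBasis (k + 1))
    (v : ellTwo)
    (hv : v = ((1 : ℂ) / m) • ∑ l ∈ Finset.range (m ^ 2 + 1), stdBasis (2 * (l : ℤ) * n)) :
    ‖v‖ = Real.sqrt ((m : ℝ) ^ 2 + 1) / m ∧ 2 * R ^ n ≤ ‖(S ^ n + Sinv ^ n) v‖ :=
  weighted_shift_test_vector_general R hR n hn m hm S Sinv hinv₂ hS v hv
end

section
/- For every real number R > 1 and every integer n ≥ 2, there exist a complex Hilbert space H and a bounded invertible linear operator T on H with ‖T‖ ≤ R and ‖T^{-1}‖ ≤ R such that ‖T^n + T^{-n}‖ ≥ (2R^n / (R^n + R^{-n})) · sup_{z ∈ A_R} |z^n + z^{-n}|; equivalently, ‖T^n + T^{-n}‖ ≥ 2R^n while sup_{z ∈ A_R} |z^n + z^{-n}| = R^n + R^{-n}. Consequently, any constant K such that A_R is a K-spectral set for all invertible T with ‖T‖ ≤ R and ‖T^{-1}‖ ≤ R must satisfy K ≥ 2R^n/(R^n + R^{-n}). -/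
/-!
On `ℓ²(ℤ/2n)` let `T` be the weighted cyclic shift `e j ↦ v j • e (j + 1)` with `v j = R` for
`0 ≤ j < n` and `v j = R⁻¹` for `n ≤ j < 2n`, so that `‖T‖, ‖T⁻¹‖ ≤ R`. On the way from `e 0` to
`e n`, `Tⁿ` only meets the weights `R`; on the way back from `e 0` to `e (-n) = e n`, `T⁻ⁿ` only
undoes the weights `R⁻¹`. Hence `Tⁿ e 0 = T⁻ⁿ e 0 = Rⁿ e n` and `‖Tⁿ + T⁻ⁿ‖ ≥ 2Rⁿ`. On the other
hand `|zⁿ + z⁻ⁿ| ≤ |z|ⁿ + |z|⁻ⁿ ≤ Rⁿ + R⁻ⁿ` on `A_R`, since `t + t⁻¹` is largest at the endpoints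
of `[R⁻ⁿ, Rⁿ]`. Testing the `K`-spectral inequality on `zⁿ + z⁻ⁿ` gives the bound on `K`.
-/

/-- The closed annulus `A_R = {z : 1/R ≤ |z| ≤ R}`. -/
def annulus (R : ℝ) : Set ℂ := {z : ℂ | 1 / R ≤ ‖z‖ ∧ ‖z‖ ≤ R}

/-- Integer powers of an invertible operator `T` with given inverse `Tinv`:
`T^j` for `j ≥ 0` and `(T⁻¹)^{-j}` for `j < 0`. -/
noncomputable def opZpow {H : Type*} [NormedAddCommGroup H] [InnerProductSpace ℂ H]
    (T Tinv : H →L[ℂ] H) (j : ℤ) : H →L[ℂ] H :=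
  if 0 ≤ j then T ^ j.toNat else Tinv ^ (-j).toNat

open Finset

lemma add_inv_le_add_inv {a b : ℝ} (ha : 0 < a) (hba : b⁻¹ ≤ a) (hab : a ≤ b) :
    a + a⁻¹ ≤ b + b⁻¹ := by
  have hb : 0 < b := ha.trans_le hab
  have key : b + b⁻¹ - (a + a⁻¹) = (b - a) * (a - b⁻¹) / a := by
    field_simp
    ring
  have : 0 ≤ (b - a) * (a - b⁻¹) / a :=
    div_nonneg (mul_nonneg (sub_nonneg.2 hab) (sub_nonneg.2 hba)) ha.le
  linarith

theorem isGreatest_norm_pow_add_inv_pow_annulus {R : ℝ} (hR : 1 ≤ R) (n : ℕ) :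
    IsGreatest ((fun z : ℂ => ‖z ^ n + z⁻¹ ^ n‖) '' annulus R) (R ^ n + R⁻¹ ^ n) := by
  have hR₀ : 0 < R := one_pos.trans_le hR
  have hnormR : ‖(R : ℂ)‖ = R := Complex.norm_of_nonneg hR₀.le
  refine ⟨⟨R, ⟨?_, hnormR.le⟩, ?_⟩, ?_⟩
  · rw [hnormR, div_le_iff₀ hR₀]
    nlinarith
  · dsimp only
    rw [← Complex.ofReal_inv, ← Complex.ofReal_pow, ← Complex.ofReal_pow, ← Complex.ofReal_add,
      Complex.norm_of_nonneg (by positivity)]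
  · rintro _ ⟨z, ⟨hz₁, hz₂⟩, rfl⟩
    rw [one_div] at hz₁
    have hz₀ : 0 < ‖z‖ := (inv_pos.2 hR₀).trans_le hz₁
    calc ‖z ^ n + z⁻¹ ^ n‖ ≤ ‖z‖ ^ n + (‖z‖ ^ n)⁻¹ := by
          simpa only [norm_pow, norm_inv, inv_pow] using norm_add_le (z ^ n) (z⁻¹ ^ n)
      _ ≤ R ^ n + (R ^ n)⁻¹ := by
          refine add_inv_le_add_inv (by positivity) ?_ (by gcongr)
          rw [← inv_pow]
          gcongr
      _ = R ^ n + R⁻¹ ^ n := by rw [inv_pow]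

section WeightedShift

variable {ι : Type*} [Fintype ι] [AddCommGroup ι]

noncomputable def weightedShift (s : ι) (v : ι → ℂ) :
    EuclideanSpace ℂ ι →L[ℂ] EuclideanSpace ℂ ι :=
  LinearMap.toContinuousLinearMap
    { toFun := fun x => WithLp.toLp 2 fun i => v (i - s) * x (i - s)
      map_add' := fun x y => by ext i; simp [mul_add]
      map_smul' := fun c x => by ext i; simp [mul_left_comm] }

@[simp]
lemma weightedShift_apply (s : ι) (v : ι → ℂ) (x : EuclideanSpace ℂ ι) (i : ι) :
    weightedShift s v x i = v (i - s) * x (i - s) :=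
  rfl

lemma weightedShift_single [DecidableEq ι] (s : ι) (v : ι → ℂ) (j : ι) (a : ℂ) :
    weightedShift s v (EuclideanSpace.single j a) = EuclideanSpace.single (j + s) (v j * a) := by
  ext i
  simp only [weightedShift_apply, PiLp.single_apply, sub_eq_iff_eq_add]
  split_ifs with h
  · rw [h, add_sub_cancel_right]
  · rw [mul_zero]

lemma weightedShift_pow_single [DecidableEq ι] (s : ι) (v : ι → ℂ) (k : ℕ) (j : ι) (a : ℂ) :
    (weightedShift s v ^ k) (EuclideanSpace.single j a) =
      EuclideanSpace.single (j + k • s) ((∏ l ∈ range k, v (j + l • s)) * a) := by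
  induction k with
  | zero => simp
  | succ k ih =>
    rw [pow_succ', mul_apply_eq_comp, ih, weightedShift_single, prod_range_succ,
      succ_nsmul, add_assoc, mul_left_comm, mul_assoc]

lemma weightedShift_comp_weightedShift (s t : ι) (v u : ι → ℂ) :
    weightedShift s v ∘L weightedShift t u = weightedShift (s + t) fun j => v (j + t) * u j := by
  ext x i
  simp only [ContinuousLinearMap.comp_apply, weightedShift_apply, ← sub_sub, sub_add_cancel,
    mul_assoc]

lemma weightedShift_zero_one : weightedShift (0 : ι) 1 = 1 := by
  ext x i
  simp

lemma norm_weightedShift_le (s : ι) (v : ι → ℂ) {c : ℝ} (hc : 0 ≤ c) (hv : ∀ i, ‖v i‖ ≤ c) :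
    ‖weightedShift s v‖ ≤ c := by
  refine ContinuousLinearMap.opNorm_le_bound _ hc fun x => ?_
  refine (pow_le_pow_iff_left₀ (norm_nonneg _) (by positivity) two_ne_zero).1 ?_
  rw [mul_pow, EuclideanSpace.norm_sq_eq, EuclideanSpace.norm_sq_eq, mul_sum]
  calc ∑ i, ‖weightedShift s v x i‖ ^ 2 ≤ ∑ i, c ^ 2 * ‖x (i - s)‖ ^ 2 := by
        refine sum_le_sum fun i _ => ?_
        rw [weightedShift_apply, norm_mul, mul_pow]
        gcongr
        exact hv _
    _ = ∑ i, c ^ 2 * ‖x i‖ ^ 2 := Equiv.sum_comp (Equiv.subRight s) fun i => c ^ 2 * ‖x i‖ ^ 2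

variable {s : ι} {v : ι → ℂ}

lemma weightedShift_comp_weightedShift_neg (hv : ∀ i, v i ≠ 0) :
    weightedShift s v ∘L weightedShift (-s) (fun j => (v (j - s))⁻¹) = 1 := by
  rw [weightedShift_comp_weightedShift, ← sub_eq_add_neg, sub_self, ← weightedShift_zero_one]
  congr 1
  funext j
  rw [← sub_eq_add_neg, mul_inv_cancel₀ (hv _), Pi.one_apply]

lemma weightedShift_neg_comp_weightedShift (hv : ∀ i, v i ≠ 0) :
    weightedShift (-s) (fun j => (v (j - s))⁻¹) ∘L weightedShift s v = 1 := by
  rw [weightedShift_comp_weightedShift, neg_add_cancel, ← weightedShift_zero_one]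
  congr 1
  funext j
  rw [add_sub_cancel_right, inv_mul_cancel₀ (hv _), Pi.one_apply]

end WeightedShift

section AnnulusExample

variable (R : ℝ) (n : ℕ)

noncomputable def annulusWeight (i : ZMod (2 * n)) : ℂ :=
  if i.val < n then R else (R : ℂ)⁻¹

variable {R}

lemma annulusWeight_ne_zero (hR : R ≠ 0) (i : ZMod (2 * n)) : annulusWeight R n i ≠ 0 := by
  unfold annulusWeight
  split_ifs <;> simpa using hR

lemma norm_annulusWeight_le (hR : 1 ≤ R) (i : ZMod (2 * n)) : ‖annulusWeight R n i‖ ≤ R := by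
  have hR₀ : 0 < R := one_pos.trans_le hR
  unfold annulusWeight
  split_ifs
  · rw [Complex.norm_of_nonneg hR₀.le]
  · rw [norm_inv, Complex.norm_of_nonneg hR₀.le]
    exact (inv_le_one_of_one_le₀ hR).trans hR

lemma norm_inv_annulusWeight_le (hR : 1 ≤ R) (i : ZMod (2 * n)) :
    ‖(annulusWeight R n i)⁻¹‖ ≤ R := by
  have hR₀ : 0 < R := one_pos.trans_le hR
  unfold annulusWeight
  split_ifs
  · rw [norm_inv, Complex.norm_of_nonneg hR₀.le]
    exact (inv_le_one_of_one_le₀ hR).trans hR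
  · rw [inv_inv, Complex.norm_of_nonneg hR₀.le]

lemma prod_annulusWeight_natCast :
    ∏ l ∈ range n, annulusWeight R n l = (R : ℂ) ^ n := by
  refine (prod_eq_pow_card fun l hl => if_pos ?_).trans (by rw [card_range])
  rw [mem_range] at hl
  rw [ZMod.val_natCast, Nat.mod_eq_of_lt (by omega)]
  exact hl

lemma prod_inv_annulusWeight_neg_natCast_sub_one :
    ∏ l ∈ range n, (annulusWeight R n (-l - 1))⁻¹ = (R : ℂ) ^ n := by
  refine (prod_eq_pow_card fun l hl => ?_).trans (by rw [card_range])
  rw [mem_range] at hl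
  have hcast : (-l - 1 : ZMod (2 * n)) = ((2 * n - 1 - l : ℕ) : ZMod (2 * n)) := by
    have h : ((2 * n - 1 - l : ℕ) : ZMod (2 * n)) + l + 1 = 0 := by
      rw [← Nat.cast_add, ← Nat.cast_add_one, show 2 * n - 1 - l + l + 1 = 2 * n by omega,
        ZMod.natCast_self]
    linear_combination -h
  rw [annulusWeight, hcast, ZMod.val_natCast, Nat.mod_eq_of_lt (by omega), if_neg (by omega),
    inv_inv]

theorem exists_invertible_norm_pow_add_inv_pow_ge (hR : 1 ≤ R) (hn : n ≠ 0) :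
    ∃ (H : Type) (_ : NormedAddCommGroup H) (_ : InnerProductSpace ℂ H) (_ : CompleteSpace H)
        (T Tinv : H →L[ℂ] H),
      T ∘L Tinv = 1 ∧ Tinv ∘L T = 1 ∧ ‖T‖ ≤ R ∧ ‖Tinv‖ ≤ R ∧
      2 * R ^ n ≤ ‖T ^ n + Tinv ^ n‖ := by
  have : NeZero (2 * n) := ⟨by omega⟩
  have hR₀ : 0 < R := one_pos.trans_le hR
  have hv := annulusWeight_ne_zero n hR₀.ne'
  set T := weightedShift 1 (annulusWeight R n)
  set Tinv := weightedShift (-1) fun j => (annulusWeight R n (j - 1))⁻¹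
  have hnn : -(n : ZMod (2 * n)) = n := by
    rw [neg_eq_iff_add_eq_zero, ← Nat.cast_add, ← two_mul, ZMod.natCast_self]
  have heval : (T ^ n + Tinv ^ n) (EuclideanSpace.single 0 1) =
      EuclideanSpace.single (n : ZMod (2 * n)) (2 * (R : ℂ) ^ n) := by
    rw [add_apply, weightedShift_pow_single, weightedShift_pow_single]
    simp only [zero_add, nsmul_one, smul_neg, hnn, prod_annulusWeight_natCast,
      prod_inv_annulusWeight_neg_natCast_sub_one, mul_one, ← PiLp.single_add, two_mul]
  refine ⟨EuclideanSpace ℂ (ZMod (2 * n)), inferInstance, inferInstance, inferInstance, T, Tinv,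
    weightedShift_comp_weightedShift_neg hv, weightedShift_neg_comp_weightedShift hv,
    norm_weightedShift_le _ _ hR₀.le (norm_annulusWeight_le n hR),
    norm_weightedShift_le _ _ hR₀.le fun _ => norm_inv_annulusWeight_le n hR _, ?_⟩
  calc 2 * R ^ n = ‖(T ^ n + Tinv ^ n) (EuclideanSpace.single 0 1)‖ := by
        rw [heval, PiLp.norm_single, norm_mul, norm_pow, Complex.norm_of_nonneg hR₀.le]
        norm_num
    _ ≤ ‖T ^ n + Tinv ^ n‖ * ‖EuclideanSpace.single (0 : ZMod (2 * n)) (1 : ℂ)‖ :=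
        ContinuousLinearMap.le_opNorm _ _
    _ = ‖T ^ n + Tinv ^ n‖ := by rw [PiLp.norm_single, norm_one, mul_one]

end AnnulusExample

lemma sum_single_add_single_smul {ι R M : Type*} [DecidableEq ι] [Semiring R] [AddCommMonoid M]
    [Module R M] {s : Finset ι} {i i' : ι} (hi : i ∈ s) (hi' : i' ∈ s) (F : ι → M) :
    ∑ j ∈ s, (Pi.single i (1 : R) + Pi.single i' 1 : ι → R) j • F j = F i + F i' := by
  simp only [Pi.add_apply, add_smul, sum_add_distrib, Pi.single_apply, ite_smul, one_smul,
    zero_smul, sum_ite_eq', hi, hi', if_true]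

lemma natCast_mem_Icc_neg (n : ℕ) : (n : ℤ) ∈ Icc (-(n : ℤ)) n :=
  mem_Icc.2 ⟨by omega, le_rfl⟩

lemma neg_natCast_mem_Icc_neg (n : ℕ) : -(n : ℤ) ∈ Icc (-(n : ℤ)) n :=
  mem_Icc.2 ⟨le_rfl, by omega⟩

lemma sum_Icc_single_add_single_mul_zpow (n : ℕ) (z : ℂ) :
    ∑ j ∈ Icc (-(n : ℤ)) n, (Pi.single (n : ℤ) 1 + Pi.single (-n : ℤ) 1 : ℤ → ℂ) j * z ^ j =
      z ^ n + z⁻¹ ^ n := by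
  simpa only [smul_eq_mul, zpow_neg, zpow_natCast, inv_pow] using
    sum_single_add_single_smul (R := ℂ) (natCast_mem_Icc_neg n) (neg_natCast_mem_Icc_neg n) (z ^ ·)

section opZpow

variable {H : Type*} [NormedAddCommGroup H] [InnerProductSpace ℂ H] (T Tinv : H →L[ℂ] H)

lemma opZpow_natCast (n : ℕ) : opZpow T Tinv n = T ^ n := by
  rw [opZpow, if_pos (Int.natCast_nonneg n), Int.toNat_natCast]

lemma opZpow_neg_natCast (n : ℕ) : opZpow T Tinv (-n) = Tinv ^ n := by
  rcases n.eq_zero_or_pos with rfl | hn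
  · simp [opZpow]
  · rw [opZpow, if_neg (by omega), neg_neg, Int.toNat_natCast]

lemma sum_Icc_single_add_single_smul_opZpow (n : ℕ) :
    ∑ j ∈ Icc (-(n : ℤ)) n,
        (Pi.single (n : ℤ) 1 + Pi.single (-n : ℤ) 1 : ℤ → ℂ) j • opZpow T Tinv j =
      T ^ n + Tinv ^ n := by
  rw [sum_single_add_single_smul (natCast_mem_Icc_neg n) (neg_natCast_mem_Icc_neg n),
    opZpow_natCast, opZpow_neg_natCast]

end opZpow

/-- For `R > 1` and `n ≥ 2`: the sup of `|zⁿ + z⁻ⁿ|` over `A_R` equals `Rⁿ + R⁻ⁿ`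
(and is attained); there is a Hilbert space `H` and an invertible `T` with
`‖T‖ ≤ R`, `‖T⁻¹‖ ≤ R` and `‖Tⁿ + T⁻ⁿ‖ ≥ 2Rⁿ`; consequently, any constant `K`
such that `A_R` is `K`-spectral (tested on Laurent polynomials) for all such `T`
satisfies `K ≥ 2Rⁿ/(Rⁿ + R⁻ⁿ)`. -/
theorem annulus_spectral_constant_lower_bound_n (R : ℝ) (hR : 1 < R) (n : ℕ) (hn : 2 ≤ n) :
    IsGreatest ((fun z : ℂ => ‖z ^ n + z⁻¹ ^ n‖) '' annulus R)
      (R ^ n + R⁻¹ ^ n) ∧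
    (∃ (H : Type) (_ : NormedAddCommGroup H) (_ : InnerProductSpace ℂ H) (_ : CompleteSpace H)
        (T Tinv : H →L[ℂ] H),
      T ∘L Tinv = 1 ∧ Tinv ∘L T = 1 ∧ ‖T‖ ≤ R ∧ ‖Tinv‖ ≤ R ∧
      2 * R ^ n ≤ ‖T ^ n + Tinv ^ n‖) ∧
    ∀ K : ℝ,
      (∀ (H : Type) [NormedAddCommGroup H] [InnerProductSpace ℂ H] [CompleteSpace H]
          (T Tinv : H →L[ℂ] H), T ∘L Tinv = 1 → Tinv ∘L T = 1 → ‖T‖ ≤ R → ‖Tinv‖ ≤ R →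
        ∀ (N : ℕ) (a : ℤ → ℂ),
          ‖∑ j ∈ Finset.Icc (-(N : ℤ)) (N : ℤ), a j • opZpow T Tinv j‖ ≤
            K * sSup ((fun z : ℂ =>
              ‖∑ j ∈ Finset.Icc (-(N : ℤ)) (N : ℤ), a j * z ^ j‖) '' annulus R)) →
      2 * R ^ n / (R ^ n + R⁻¹ ^ n) ≤ K := by
  have hsup := isGreatest_norm_pow_add_inv_pow_annulus hR.le n
  have hex := exists_invertible_norm_pow_add_inv_pow_ge n hR.le (by omega)
  refine ⟨hsup, hex, fun K hK => ?_⟩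
  obtain ⟨H, _, _, _, T, Tinv, hTTinv, hTinvT, hT, hTinv, hlow⟩ := hex
  have hspec := hK H T Tinv hTTinv hTinvT hT hTinv n (Pi.single (n : ℤ) 1 + Pi.single (-n : ℤ) 1)
  simp only [sum_Icc_single_add_single_smul_opZpow, sum_Icc_single_add_single_mul_zpow,
    hsup.csSup_eq] at hspec
  rw [div_le_iff₀ (by positivity)]
  linarith
end
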